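/- Let (A, μ, Δ, α, c) be a Hom-bialgebra with weak unit c over a field of characteristic 0, and let R = Σ sᵢ ⊗ tᵢ ∈ A ⊗ A. Define λ₁ : A* → A by λ₁(φ) = Σ φ(sᵢ) α(tᵢ) and λ₁' : A* → A by λ₁'(φ) = Σ φ(α(sᵢ)) tᵢ. Then the axiom (Δ ⊗ α)(R) = R₁₃R₂₃ holds if and only if λ₁ ∘ Δ* = μ ∘ (λ₁' ⊗ λ₁') : A* ⊗ A* → A, where Δ* is the convolution product on A* dual to Δ. -/

import Mathlib

/-!
Both sides of the equivalence pair a tensor in `(A ⊗ A) ⊗ A` with `φ ⊗ ψ` on its first two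
factors: `λ₁(Δ*(φ, ψ))` is the pairing with `(Δ ⊗ α)(R)`, and, since the weak unit gives
`R₁₃R₂₃ = Σ α(sᵢ) ⊗ α(sⱼ) ⊗ tᵢtⱼ`, `μ(λ₁'(φ), λ₁'(ψ))` is the pairing with `R₁₃R₂₃`.
Over a field these pairings separate points (expand in a basis of `A`), so the two tensors agree
iff all their pairings do.
-/

open TensorProduct

variable {k : Type*} [Field k] [CharZero k] {A : Type*} [AddCommGroup A] [Module k A]

noncomputable def mulT2 (μ : A →ₗ[k] A →ₗ[k] A) (X Y : A ⊗[k] A) : A ⊗[k] A :=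
  ((TensorProduct.map (TensorProduct.lift μ) (TensorProduct.lift μ)) ∘ₗ
    (TensorProduct.tensorTensorTensorComm k A A A A).toLinearMap) (X ⊗ₜ[k] Y)

noncomputable def mulT3 (μ : A →ₗ[k] A →ₗ[k] A) (X Y : (A ⊗[k] A) ⊗[k] A) :
    (A ⊗[k] A) ⊗[k] A :=
  ((TensorProduct.map
      ((TensorProduct.map (TensorProduct.lift μ) (TensorProduct.lift μ)) ∘ₗ
        (TensorProduct.tensorTensorTensorComm k A A A A).toLinearMap)
      (TensorProduct.lift μ)) ∘ₗ
    (TensorProduct.tensorTensorTensorComm k (A ⊗[k] A) A (A ⊗[k] A) A).toLinearMap)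
    (X ⊗ₜ[k] Y)

noncomputable def R12e (c : A) (R : A ⊗[k] A) : (A ⊗[k] A) ⊗[k] A := R ⊗ₜ[k] c

noncomputable def R23e (c : A) (R : A ⊗[k] A) : (A ⊗[k] A) ⊗[k] A :=
  (TensorProduct.assoc k A A A).symm (c ⊗ₜ[k] R)

noncomputable def R13e (c : A) (R : A ⊗[k] A) : (A ⊗[k] A) ⊗[k] A :=
  TensorProduct.map (TensorProduct.comm k A A).toLinearMap LinearMap.id (R23e c R)

/-- The dual multiplication `Δ*` on `A*`: `⟨Δ*(φ, ψ), x⟩ = ⟨φ ⊗ ψ, Δ(x)⟩`. -/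
noncomputable def dualMul (Δ : A →ₗ[k] A ⊗[k] A) (φ ψ : Module.Dual k A) :
    Module.Dual k A :=
  LinearMap.mul' k k ∘ₗ TensorProduct.map φ ψ ∘ₗ Δ

/-- `λ₁(φ) = Σ φ(sᵢ) α(tᵢ)` for `R = Σ sᵢ ⊗ tᵢ`. -/
noncomputable def lam1 (α : A →ₗ[k] A) (R : A ⊗[k] A) (φ : Module.Dual k A) : A :=
  (TensorProduct.lid k A) (TensorProduct.map φ α R)

/-- `λ₁'(φ) = Σ φ(α(sᵢ)) tᵢ` for `R = Σ sᵢ ⊗ tᵢ`. -/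
noncomputable def lam1' (α : A →ₗ[k] A) (R : A ⊗[k] A) (φ : Module.Dual k A) : A :=
  (TensorProduct.lid k A) (TensorProduct.map (φ ∘ₗ α) LinearMap.id R)

namespace TensorProduct

theorem eq_zero_of_forall_lid_rTensor_eq_zero {R M N : Type*} [CommSemiring R]
    [AddCommMonoid M] [Module R M] [Module.Free R M] [AddCommMonoid N] [Module R N]
    (x : M ⊗[R] N) (h : ∀ f : Module.Dual R M, TensorProduct.lid R N (f.rTensor N x) = 0) :
    x = 0 := by
  classical
  apply (equivFinsuppOfBasisLeft (Module.Free.chooseBasis R M)).injective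
  ext i
  simp [equivFinsuppOfBasisLeft_apply, h]

theorem lid_rTensor_dualDistrib {R M N P : Type*} [CommSemiring R]
    [AddCommMonoid M] [Module R M] [AddCommMonoid N] [Module R N] [AddCommMonoid P] [Module R P]
    (f : Module.Dual R M) (g : Module.Dual R N) (x : (M ⊗[R] N) ⊗[R] P) :
    TensorProduct.lid R P ((dualDistrib R M N (f ⊗ₜ g)).rTensor P x) =
      TensorProduct.lid R P (g.rTensor P
        (TensorProduct.lid R (N ⊗[R] P) (f.rTensor _ (TensorProduct.assoc R M N P x)))) := by
  induction x using TensorProduct.induction_on with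
  | zero => simp
  | tmul mn p =>
    induction mn using TensorProduct.induction_on with
    | zero => simp
    | tmul m n => simp [mul_smul]
    | add _ _ h₁ h₂ => simp_all [add_tmul]
  | add _ _ h₁ h₂ => simp_all

theorem eq_iff_forall_lid_rTensor_dualDistrib {R M N P : Type*} [CommRing R]
    [AddCommGroup M] [Module R M] [Module.Free R M] [AddCommGroup N] [Module R N]
    [Module.Free R N] [AddCommGroup P] [Module R P] (x y : (M ⊗[R] N) ⊗[R] P) :
    x = y ↔ ∀ (f : Module.Dual R M) (g : Module.Dual R N),
      TensorProduct.lid R P ((dualDistrib R M N (f ⊗ₜ g)).rTensor P x) =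
        TensorProduct.lid R P ((dualDistrib R M N (f ⊗ₜ g)).rTensor P y) := by
  refine ⟨fun h _ _ ↦ h ▸ rfl, fun h ↦ ?_⟩
  rw [← sub_eq_zero, ← (TensorProduct.assoc R M N P).map_eq_zero_iff]
  refine eq_zero_of_forall_lid_rTensor_eq_zero _ fun f ↦ ?_
  refine eq_zero_of_forall_lid_rTensor_eq_zero _ fun g ↦ ?_
  rw [← lid_rTensor_dualDistrib, map_sub, map_sub, h, sub_self]

end TensorProduct

section HomBialgebra

variable {K V : Type*} [Field K] [AddCommGroup V] [Module K V]

theorem dualMul_eq_dualDistrib_comp (Δ : V →ₗ[K] V ⊗[K] V) (φ ψ : Module.Dual K V) :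
    dualMul Δ φ ψ = dualDistrib K V V (φ ⊗ₜ ψ) ∘ₗ Δ :=
  rfl

theorem lam1_dualMul (Δ : V →ₗ[K] V ⊗[K] V) (α : V →ₗ[K] V) (R : V ⊗[K] V)
    (φ ψ : Module.Dual K V) :
    lam1 α R (dualMul Δ φ ψ) =
      TensorProduct.lid K V ((dualDistrib K V V (φ ⊗ₜ ψ)).rTensor V (map Δ α R)) := by
  rw [dualMul_eq_dualDistrib_comp, lam1, ← LinearMap.rTensor_comp_map]
  rfl

theorem mulT3_tmul (μ : V →ₗ[K] V →ₗ[K] V) (a b e x y z : V) :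
    mulT3 μ ((a ⊗ₜ b) ⊗ₜ e) ((x ⊗ₜ y) ⊗ₜ z) = (μ a x ⊗ₜ μ b y) ⊗ₜ μ e z := by
  simp [mulT3]

theorem R13e_tmul (c s t : V) : R13e c (s ⊗ₜ[K] t) = (s ⊗ₜ c) ⊗ₜ t := by
  simp [R13e, R23e]

theorem R23e_tmul (c s t : V) : R23e c (s ⊗ₜ[K] t) = (c ⊗ₜ s) ⊗ₜ t := by
  simp [R23e]

theorem mul_lam1'_lam1' (μ : V →ₗ[K] V →ₗ[K] V) (α : V →ₗ[K] V) (c : V)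
    (hcl : ∀ x : V, μ c x = α x) (hcr : ∀ x : V, μ x c = α x)
    (R₁ R₂ : V ⊗[K] V) (φ ψ : Module.Dual K V) :
    μ (lam1' α R₁ φ) (lam1' α R₂ ψ) = TensorProduct.lid K V
      ((dualDistrib K V V (φ ⊗ₜ ψ)).rTensor V (mulT3 μ (R13e c R₁) (R23e c R₂))) := by
  induction R₁ using TensorProduct.induction_on with
  | zero => simp [lam1', R13e, R23e, mulT3]
  | tmul s t =>
    induction R₂ using TensorProduct.induction_on with
    | zero => simp [lam1', R23e, mulT3]
    | tmul u v =>
      rw [R13e_tmul, R23e_tmul, mulT3_tmul, hcr, hcl]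
      simp [lam1', smul_smul, mul_comm]
    | add _ _ h₁ h₂ => simp_all [lam1', R23e, mulT3, tmul_add]
  | add _ _ h₁ h₂ => simp_all [lam1', R13e, R23e, mulT3, tmul_add, add_tmul]

end HomBialgebra

theorem first_axiom_iff_lambda_one_general
    (μ : A →ₗ[k] A →ₗ[k] A) (Δ : A →ₗ[k] A ⊗[k] A) (α : A →ₗ[k] A) (c : A) (R : A ⊗[k] A)
    (hcl : ∀ x : A, μ c x = α x) (hcr : ∀ x : A, μ x c = α x) :
    (TensorProduct.map Δ α R = mulT3 μ (R13e c R) (R23e c R)) ↔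
    (∀ φ ψ : Module.Dual k A,
      lam1 α R (dualMul Δ φ ψ) = μ (lam1' α R φ) (lam1' α R ψ)) := by
  simp only [lam1_dualMul, mul_lam1'_lam1' μ α c hcl hcr]
  exact eq_iff_forall_lid_rTensor_dualDistrib _ _

/-- The axiom `(Δ ⊗ α)(R) = R₁₃R₂₃` holds if and only if
`λ₁ ∘ Δ* = μ ∘ (λ₁' ⊗ λ₁')`. -/
theorem first_axiom_iff_lambda_one
    (μ : A →ₗ[k] A →ₗ[k] A) (Δ : A →ₗ[k] A ⊗[k] A) (α : A →ₗ[k] A) (c : A) (R : A ⊗[k] A)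
    (hαμ : ∀ x y : A, α (μ x y) = μ (α x) (α y))
    (hassoc : ∀ x y z : A, μ (μ x y) (α z) = μ (α x) (μ y z))
    (hαΔ : Δ ∘ₗ α = TensorProduct.map α α ∘ₗ Δ)
    (hcoassoc : (TensorProduct.assoc k A A A).toLinearMap ∘ₗ TensorProduct.map Δ α ∘ₗ Δ
      = TensorProduct.map α Δ ∘ₗ Δ)
    (hcompat : ∀ x y : A, Δ (μ x y) = mulT2 μ (Δ x) (Δ y))
    (hcl : ∀ x : A, μ c x = α x) (hcr : ∀ x : A, μ x c = α x) :
    (TensorProduct.map Δ α R = mulT3 μ (R13e c R) (R23e c R)) ↔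
    (∀ φ ψ : Module.Dual k A,
      lam1 α R (dualMul Δ φ ψ) = μ (lam1' α R φ) (lam1' α R ψ)) :=
  first_axiom_iff_lambda_one_general μ Δ α c R hcl hcr
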